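/- arXiv:2007.02377 — 3 statements merged into one kernel-verified Lean document; each statement's English description precedes it below -/
import Mathlib

section
/- For i,j,k∈{1,…,n}, let S_{i,j,k} = {v} ∪ {v_{a_1},…,v_{a_i}} ∪ {v_{b_1},…,v_{b_j}} ∪ {v_{c_{k+1}},…,v_{c_n}}. Then the cut of S_{i,j,k} is exactly the three edges (v_{a_i},v_{a_{i+1}}), (v_{b_j},v_{b_{j+1}}), (v_{c_k},v_{c_{k+1}}), so cost(S_{i,j,k}) = 3β + T + a_i + b_j − c_k; moreover S_{i,j,k} is a bisection if and only if i+j=k. -/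
open Finset

namespace SCLB

inductive V (n : ℕ) : Type
  | u : V n
  | v : V n
  | A : Fin n → V n
  | B : Fin n → V n
  | C : Fin n → V n
  deriving DecidableEq, Fintype

/-- Edges: `(p, some i)` is the `i`-th edge (0-indexed) on path `p` (`p = 0,1,2` for
`P_A, P_B, P_C`), joining the `(i+1)`-st path vertex to the next one; `(p, none)` is the
special edge `e_A`, `e_B`, `e_C` respectively. -/
abbrev E (n : ℕ) := Fin 3 × Option (Fin n)

def Tsum (n : ℕ) (a b c : Fin n → ℕ) : ℕ := ∑ i, (a i + b i + c i)

def beta (n : ℕ) (a b c : Fin n → ℕ) : ℕ := 4 * Tsum n a b c * n ^ 2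

def firstV {n : ℕ} (f : Fin n → V n) (dflt : V n) : V n :=
  if h : 0 < n then f ⟨0, h⟩ else dflt

def nextV {n : ℕ} (f : Fin n → V n) (top : V n) (i : Fin n) : V n :=
  if h : i.val + 1 < n then f ⟨i.val + 1, h⟩ else top

/-- The two endpoints of each edge. -/
def ends (n : ℕ) : E n → V n × V n
  | (p, none) =>
      if p = 0 then (V.v, firstV V.A V.u)
      else if p = 1 then (V.v, firstV V.B V.u)
      else (V.u, firstV V.C V.v)
  | (p, some i) =>
      if p = 0 then (V.A i, nextV V.A V.u i)
      else if p = 1 then (V.B i, nextV V.B V.u i)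
      else (V.C i, nextV V.C V.v i)

/-- Edge costs. -/
def ecost (n : ℕ) (a b c : Fin n → ℕ) : E n → ℚ
  | (_, none) => 1210 * (n : ℚ) ^ 2 * (2 * (beta n a b c : ℚ) + (Tsum n a b c : ℚ))
  | (p, some i) =>
      if p = 0 then (beta n a b c : ℚ) + (a i : ℚ)
      else if p = 1 then (beta n a b c : ℚ) + (b i : ℚ)
      else (beta n a b c : ℚ) + (Tsum n a b c : ℚ) - (c i : ℚ)

/-- Vertex weights. -/
def wt (n : ℕ) : V n → ℚ
  | V.u => 10 * n
  | V.v => 11 * n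
  | _ => 1

/-- The cut of `S`: edges with exactly one endpoint in `S`. -/
def cut (n : ℕ) (S : Finset (V n)) : Finset (E n) :=
  Finset.univ.filter fun e => ¬(((ends n e).1 ∈ S) ↔ ((ends n e).2 ∈ S))

def cutCost (n : ℕ) (a b c : Fin n → ℕ) (S : Finset (V n)) : ℚ :=
  ∑ e ∈ cut n S, ecost n a b c e

def wOf (n : ℕ) (S : Finset (V n)) : ℚ := ∑ x ∈ S, wt n x

def quotientVal (n : ℕ) (a b c : Fin n → ℕ) (S : Finset (V n)) : ℚ :=
  cutCost n a b c S / min (wOf n S) (wOf n Sᶜ)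

def sparsity (n : ℕ) (a b c : Fin n → ℕ) (S : Finset (V n)) : ℚ :=
  cutCost n a b c S / (wOf n S * wOf n Sᶜ)

def IsBisection (n : ℕ) (S : Finset (V n)) : Prop :=
  wOf n S = 12 * n ∧ wOf n Sᶜ = 12 * n

def PA (n : ℕ) : Finset (E n) := Finset.univ.filter fun e => e.1 = 0
def PB (n : ℕ) : Finset (E n) := Finset.univ.filter fun e => e.1 = 1
def PC (n : ℕ) : Finset (E n) := Finset.univ.filter fun e => e.1 = 2

def inSijk (n : ℕ) (i j k : Fin n) : V n → Bool
  | V.v => true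
  | V.u => false
  | V.A t => decide (t.val ≤ i.val)
  | V.B t => decide (t.val ≤ j.val)
  | V.C t => decide (k.val < t.val)

/-- The set `S_{i,j,k} = {v} ∪ {v_{a_1},…,v_{a_i}} ∪ {v_{b_1},…,v_{b_j}} ∪
{v_{c_{k+1}},…,v_{c_n}}` (here `i, j, k : Fin n` are the 0-indexed versions of the paper's
1-indexed `i, j, k`). -/
def Sijk (n : ℕ) (i j k : Fin n) : Finset (V n) :=
  Finset.univ.filter fun x => inSijk n i j k x = true

/-!
Each of the three paths leaves `S_{i,j,k}` exactly once: `S` contains `v` and the prefixes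
`v_{a_1},…,v_{a_i}` and `v_{b_1},…,v_{b_j}` of `P_A` and `P_B`, whose far end `u` lies outside
`S`, and the suffix `v_{c_{k+1}},…,v_{c_n}` of `P_C`, whose far end is `v` and whose near end
`u` lies outside `S`. So the cut consists of one edge per path, and its cost is read off.
Since `w(V) = 24n`, `S` is a bisection iff `w(S) = 11n + i + j + (n - k) = 12n`, i.e. `i + j = k`.
-/

def equivSum (n : ℕ) : V n ≃ Unit ⊕ Unit ⊕ Fin n ⊕ Fin n ⊕ Fin n where
  toFun
    | V.u => .inl ()
    | V.v => .inr (.inl ())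
    | V.A t => .inr (.inr (.inl t))
    | V.B t => .inr (.inr (.inr (.inl t)))
    | V.C t => .inr (.inr (.inr (.inr t)))
  invFun
    | .inl _ => V.u
    | .inr (.inl _) => V.v
    | .inr (.inr (.inl t)) => V.A t
    | .inr (.inr (.inr (.inl t))) => V.B t
    | .inr (.inr (.inr (.inr t))) => V.C t
  left_inv x := by cases x <;> rfl
  right_inv y := by rcases y with _ | _ | t | t | t <;> rfl

theorem sum_V {M : Type*} [AddCommMonoid M] (n : ℕ) (f : V n → M) :
    ∑ x, f x = f V.u + f V.v + ∑ t, f (V.A t) + ∑ t, f (V.B t) + ∑ t, f (V.C t) := by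
  rw [← (equivSum n).symm.sum_comp f]
  simp only [Fintype.sum_sum_type, Fintype.sum_unique, equivSum, Equiv.coe_fn_symm_mk]
  abel

theorem wOf_add_wOf_compl (n : ℕ) (S : Finset (V n)) : wOf n S + wOf n Sᶜ = 24 * n := by
  rw [wOf, wOf, sum_add_sum_compl, sum_V]
  simp only [wt, sum_const, card_univ, Fintype.card_fin, nsmul_eq_mul, mul_one]
  ring

theorem isBisection_iff (n : ℕ) (S : Finset (V n)) : IsBisection n S ↔ wOf n S = 12 * n := by
  have hsum := wOf_add_wOf_compl n S
  exact ⟨And.left, fun h => ⟨h, by linarith⟩⟩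

theorem nextV_mem_iff {n : ℕ} {f : Fin n → V n} {top : V n} {S : Finset (V n)} {P : ℕ → Prop}
    (hf : ∀ t, f t ∈ S ↔ P t) (htop : top ∈ S ↔ P n) (t : Fin n) :
    nextV f top t ∈ S ↔ P (t + 1) := by
  unfold nextV
  split_ifs with h
  · exact hf _
  · rwa [show t.val + 1 = n by omega]

section Sijk

variable {n : ℕ} (i j k : Fin n)

@[simp] theorem v_mem_Sijk : V.v ∈ Sijk n i j k := by simp [Sijk, inSijk]

@[simp] theorem u_notMem_Sijk : V.u ∉ Sijk n i j k := by simp [Sijk, inSijk]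

@[simp] theorem A_mem_Sijk (t : Fin n) : V.A t ∈ Sijk n i j k ↔ t.val ≤ i := by
  simp [Sijk, inSijk]

@[simp] theorem B_mem_Sijk (t : Fin n) : V.B t ∈ Sijk n i j k ↔ t.val ≤ j := by
  simp [Sijk, inSijk]

@[simp] theorem C_mem_Sijk (t : Fin n) : V.C t ∈ Sijk n i j k ↔ k < t.val := by
  simp [Sijk, inSijk]

theorem nextV_A_mem_Sijk (t : Fin n) : nextV V.A V.u t ∈ Sijk n i j k ↔ t.val + 1 ≤ i :=
  nextV_mem_iff (P := (· ≤ i.val)) (A_mem_Sijk i j k) (by simp) t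

theorem nextV_B_mem_Sijk (t : Fin n) : nextV V.B V.u t ∈ Sijk n i j k ↔ t.val + 1 ≤ j :=
  nextV_mem_iff (P := (· ≤ j.val)) (B_mem_Sijk i j k) (by simp) t

theorem nextV_C_mem_Sijk (t : Fin n) : nextV V.C V.v t ∈ Sijk n i j k ↔ k < t.val + 1 :=
  nextV_mem_iff (P := (k.val < ·)) (C_mem_Sijk i j k) (by simp) t

theorem cut_Sijk :
    cut n (Sijk n i j k) =
      {((0 : Fin 3), some i), ((1 : Fin 3), some j), ((2 : Fin 3), some k)} := by
  have hn : 0 < n := i.pos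
  ext ⟨p, o⟩
  simp only [cut, mem_filter, mem_univ, true_and, mem_insert, mem_singleton, Prod.mk.injEq]
  fin_cases p <;> rcases o with _ | t <;>
    simp [ends, firstV, hn, nextV_A_mem_Sijk, nextV_B_mem_Sijk, nextV_C_mem_Sijk,
      Fin.ext_iff] <;> omega

theorem cutCost_Sijk (a b c : Fin n → ℕ) :
    cutCost n a b c (Sijk n i j k) =
      3 * (beta n a b c : ℚ) + (Tsum n a b c : ℚ) + (a i : ℚ) + (b j : ℚ) - (c k : ℚ) := by
  rw [cutCost, cut_Sijk, sum_insert (by simp), sum_insert (by simp), sum_singleton]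
  simp only [ecost, if_pos, Fin.reduceEq, if_false]
  ring

theorem wOf_Sijk : wOf n (Sijk n i j k) = 12 * n + i + j + 1 - k := by
  rw [wOf, ← Finset.sum_ite_mem_eq, sum_V]
  simp only [wt, u_notMem_Sijk, v_mem_Sijk, A_mem_Sijk, B_mem_Sijk, C_mem_Sijk, if_true,
    if_false, ← Fin.le_def, ← Fin.lt_def, sum_boole, filter_ge_eq_Iic, filter_lt_eq_Ioi,
    Fin.card_Iic, Fin.card_Ioi]
  rw [Nat.sub_sub, Nat.cast_sub (by omega : 1 + k.val ≤ n)]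
  push_cast
  ring

end Sijk

theorem Sijk_cut_cost_bisection_general (n : ℕ) (a b c : Fin n → ℕ)
    (i j k : Fin n) :
    cut n (Sijk n i j k) =
      {((0 : Fin 3), some i), ((1 : Fin 3), some j), ((2 : Fin 3), some k)}
    ∧ cutCost n a b c (Sijk n i j k) =
        3 * (beta n a b c : ℚ) + (Tsum n a b c : ℚ) + (a i : ℚ) + (b j : ℚ) - (c k : ℚ)
    ∧ (IsBisection n (Sijk n i j k) ↔ i.val + j.val + 1 = k.val) := by
  refine ⟨cut_Sijk i j k, cutCost_Sijk i j k a b c, ?_⟩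
  rw [isBisection_iff, wOf_Sijk, ← @Nat.cast_inj ℚ]
  push_cast
  constructor <;> intro h <;> linarith

/-- The cut of `S_{i,j,k}` is exactly the three edges `(v_{a_i},v_{a_{i+1}})`,
`(v_{b_j},v_{b_{j+1}})`, `(v_{c_k},v_{c_{k+1}})`; its cost is `3β + T + a_i + b_j − c_k`;
and it is a bisection iff `i + j = k` (in the paper's 1-indexing, i.e.
`(i+1) + (j+1) = (k+1)` for the 0-indexed `i, j, k` used here). -/
theorem Sijk_cut_cost_bisection (n : ℕ) (hn : 1 < n) (a b c : Fin n → ℕ)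
    (ha : ∀ i, 0 < a i) (hb : ∀ i, 0 < b i) (hc : ∀ i, 0 < c i)
    (i j k : Fin n) :
    cut n (Sijk n i j k) =
      {((0 : Fin 3), some i), ((1 : Fin 3), some j), ((2 : Fin 3), some k)}
    ∧ cutCost n a b c (Sijk n i j k) =
        3 * (beta n a b c : ℚ) + (Tsum n a b c : ℚ) + (a i : ℚ) + (b j : ℚ) - (c k : ℚ)
    ∧ (IsBisection n (Sijk n i j k) ↔ i.val + j.val + 1 = k.val) :=
  Sijk_cut_cost_bisection_general n a b c i j k

end SCLB
end

section
/- If there exists i∈{1,…,n} with A[i]=B[i]=1, then the weighted diameter of G equals (n+2)·M + 2; otherwise the weighted diameter of G is at most (n+2)·M + 1. Equivalently, the weighted diameter of G is at most (n+2)·M+1 if and only if A and B are disjoint (for every i, A[i]·B[i]=0). -/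
/-
For every `i, j` the closed walk `a i — l — l' — b j — r' — r — a i` has weight
`2 ((n + 2) M + A[i] + B[j])` and passes through `a i`, `b j` and all four hubs, so any two of these
vertices are at distance at most `(n + 2) M + A[i] + B[j]`. Taking `j = i` (any index, for two
hubs) covers every pair except `a i, a j` and `b i, b j`, which lie on the closed walks
`l — a i — r — a j — l` and `l' — b i — r' — b j — l'` of weight at most
`2 ((n + 1) M + 2)`, and `a i, b j` with `i ≠ j`, for which one of the two halves of the first
walk has weight at most `(n + 1) M + 2`. Hence the diameter is at most
`(n + 2) M + max_k (A[k] + B[k])`.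

Conversely `potential i` changes along each edge by at most its weight and increases by
`(n + 2) M + A[i] + B[i]` from `a i` to `b i`, which bounds `dist (a i) (b i)` from below.
-/

open Finset

namespace DiamGadget

inductive V (n : ℕ) : Type
  | a : Fin n → V n
  | b : Fin n → V n
  | l : V n
  | r : V n
  | l' : V n
  | r' : V n
  deriving DecidableEq, Fintype

def M : ℕ := 4

/-- One-directional edge-weight table encoding the instance `(A, B)`; a value `0` means
"no edge in this direction".  Here `i : Fin n` is 0-indexed, so `a i` is the paper's
`a_{i+1}`, whence the weights `(i+1)·M + A[i]` and `(n−i)·M + A[i]`. -/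
def wt0 (n : ℕ) (A B : Fin n → Fin 2) : V n → V n → ℕ
  | V.l, V.l' => M
  | V.r, V.r' => M
  | V.a i, V.l => (i.val + 1) * M + (A i).val
  | V.a i, V.r => (n - i.val) * M + (A i).val
  | V.b i, V.l' => (n - i.val) * M + (B i).val
  | V.b i, V.r' => (i.val + 1) * M + (B i).val
  | _, _ => 0

/-- The symmetrized edge weight. -/
def wtE (n : ℕ) (A B : Fin n → Fin 2) (x y : V n) : ℕ :=
  wt0 n A B x y + wt0 n A B y x

/-- The graph `G`: `x` and `y` are adjacent iff the weight table records an edge. -/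
def G (n : ℕ) (A B : Fin n → Fin 2) : SimpleGraph (V n) :=
  SimpleGraph.fromRel fun x y => wt0 n A B x y ≠ 0

/-- The total weight of a walk. -/
def wWeight {n : ℕ} {A B : Fin n → Fin 2} {x y : V n} (p : (G n A B).Walk x y) : ℕ :=
  (p.darts.map fun d => wtE n A B d.toProd.1 d.toProd.2).sum

/-- The weighted shortest-path distance: the minimum over paths from `x` to `y` of the sum
of the edge weights along the path. -/
noncomputable def dist (n : ℕ) (A B : Fin n → Fin 2) (x y : V n) : ℕ :=
  sInf {m | ∃ p : (G n A B).Walk x y, p.IsPath ∧ wWeight p = m}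

/-- The weighted diameter: the maximum of `dist x y` over all pairs of vertices. -/
noncomputable def diam (n : ℕ) (A B : Fin n → Fin 2) : ℕ :=
  Finset.univ.sup fun p : V n × V n => dist n A B p.1 p.2

section Walks

variable {n : ℕ} {A B : Fin n → Fin 2}

open SimpleGraph

theorem wtE_comm (x y : V n) : wtE n A B x y = wtE n A B y x :=
  Nat.add_comm _ _

@[simp]
theorem wWeight_nil {x : V n} : wWeight (Walk.nil : (G n A B).Walk x x) = 0 := rfl

@[simp]
theorem wWeight_cons {x y z : V n} (h : (G n A B).Adj x y) (p : (G n A B).Walk y z) :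
    wWeight (Walk.cons h p) = wtE n A B x y + wWeight p := by
  simp [wWeight]

theorem wWeight_append {x y z : V n} (p : (G n A B).Walk x y) (q : (G n A B).Walk y z) :
    wWeight (p.append q) = wWeight p + wWeight q := by
  simp [wWeight, Walk.darts_append]

theorem wWeight_reverse {x y : V n} (p : (G n A B).Walk x y) :
    wWeight p.reverse = wWeight p := by
  simp [wWeight, Walk.darts_reverse, Function.comp_def, wtE_comm]

theorem wWeight_bypass_le {x y : V n} (p : (G n A B).Walk x y) :
    wWeight p.bypass ≤ wWeight p :=
  (p.darts_bypass_sublist_darts.map _).sum_le_sum fun _ _ => Nat.zero_le _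

theorem dist_le_wWeight {x y : V n} (p : (G n A B).Walk x y) : dist n A B x y ≤ wWeight p :=
  le_trans (Nat.sInf_le ⟨p.bypass, p.bypass_isPath, rfl⟩) (wWeight_bypass_le p)

theorem dist_comm (x y : V n) : dist n A B x y = dist n A B y x := by
  suffices h : ∀ x y : V n, {m | ∃ p : (G n A B).Walk x y, p.IsPath ∧ wWeight p = m} ⊆
      {m | ∃ p : (G n A B).Walk y x, p.IsPath ∧ wWeight p = m} from
    congrArg sInf ((h x y).antisymm (h y x))
  rintro x y _ ⟨p, hp, rfl⟩
  exact ⟨p.reverse, p.isPath_reverse_iff.mpr hp, wWeight_reverse p⟩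

-- Two vertices of a closed walk cut it into a walk from `x` to `y` and one from `y` to `x`.
theorem two_mul_dist_le {u x y : V n} (c : (G n A B).Walk u u) (hx : x ∈ c.support)
    (hy : y ∈ c.support) : 2 * dist n A B x y ≤ wWeight c := by
  set c' := (c.dropUntil x hx).append (c.takeUntil x hx)
  have hc' : wWeight c' = wWeight c := by
    rw [← c.take_spec hx, wWeight_append, wWeight_append, Nat.add_comm]
  have hy' : y ∈ c'.support := by
    rw [← c.take_spec hx, Walk.mem_support_append_iff] at hy
    rw [Walk.mem_support_append_iff]
    exact hy.symm
  have h₁ := dist_le_wWeight (c'.takeUntil y hy')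
  have h₂ := dist_le_wWeight (c'.dropUntil y hy')
  rw [dist_comm] at h₂
  rw [← hc', ← c'.take_spec hy', wWeight_append]
  omega

section Lipschitz

variable (f : V n → ℤ) (hf : ∀ x y : V n, (G n A B).Adj x y → f y ≤ f x + wtE n A B x y)
include hf

theorem sub_le_wWeight_of_lipschitz {x y : V n} (p : (G n A B).Walk x y) :
    f y - f x ≤ wWeight p := by
  induction p with
  | nil => simp
  | cons hadj p ih =>
    have := hf _ _ hadj
    push_cast [wWeight_cons]
    omega

theorem sub_le_dist_of_lipschitz {x y : V n} (h : (G n A B).Reachable x y) :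
    f y - f x ≤ dist n A B x y := by
  have hne : {m | ∃ p : (G n A B).Walk x y, p.IsPath ∧ wWeight p = m}.Nonempty :=
    let ⟨p⟩ := h; ⟨_, p.bypass, p.bypass_isPath, rfl⟩
  obtain ⟨p, -, hp⟩ := Nat.sInf_mem hne
  rw [dist, ← hp]
  exact sub_le_wWeight_of_lipschitz f hf p

end Lipschitz

end Walks

section Gadget

variable {n : ℕ} {A B : Fin n → Fin 2}

open SimpleGraph

theorem adj_of_wt0_ne_zero {x y : V n} (hxy : x ≠ y) (h : wt0 n A B x y ≠ 0) :
    (G n A B).Adj x y :=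
  (fromRel_adj _ x y).mpr ⟨hxy, Or.inl h⟩

theorem adj_a_l (i : Fin n) : (G n A B).Adj (V.a i) V.l :=
  adj_of_wt0_ne_zero nofun (by simp [wt0, M])

theorem adj_a_r (i : Fin n) : (G n A B).Adj (V.a i) V.r :=
  adj_of_wt0_ne_zero nofun (by simp [wt0, M]; omega)

theorem adj_b_l' (i : Fin n) : (G n A B).Adj (V.b i) V.l' :=
  adj_of_wt0_ne_zero nofun (by simp [wt0, M]; omega)

theorem adj_b_r' (i : Fin n) : (G n A B).Adj (V.b i) V.r' :=
  adj_of_wt0_ne_zero nofun (by simp [wt0, M])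

theorem adj_l_l' : (G n A B).Adj (V.l : V n) V.l' :=
  adj_of_wt0_ne_zero nofun (by simp [wt0, M])

theorem adj_r_r' : (G n A B).Adj (V.r : V n) V.r' :=
  adj_of_wt0_ne_zero nofun (by simp [wt0, M])

variable (A B)

def leftArc (i j : Fin n) : (G n A B).Walk (V.a i) (V.b j) :=
  .cons (adj_a_l i) (.cons adj_l_l' (.cons (adj_b_l' j).symm .nil))

def rightArc (i j : Fin n) : (G n A B).Walk (V.a i) (V.b j) :=
  .cons (adj_a_r i) (.cons adj_r_r' (.cons (adj_b_r' j).symm .nil))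

def abCycle (i j : Fin n) : (G n A B).Walk (V.a i) (V.a i) :=
  (leftArc A B i j).append (rightArc A B i j).reverse

def aaCycle (i j : Fin n) : (G n A B).Walk V.l V.l :=
  .cons (adj_a_l i).symm (.cons (adj_a_r i) (.cons (adj_a_r j).symm (.cons (adj_a_l j) .nil)))

def bbCycle (i j : Fin n) : (G n A B).Walk V.l' V.l' :=
  .cons (adj_b_l' i).symm (.cons (adj_b_r' i) (.cons (adj_b_r' j).symm (.cons (adj_b_l' j) .nil)))

variable {A B}

theorem wWeight_leftArc (i j : Fin n) :
    wWeight (leftArc A B i j) = (n + 2 + i - j) * M + (A i).val + (B j).val := by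
  simp [leftArc, wtE, wt0, M]
  omega

theorem wWeight_rightArc (i j : Fin n) :
    wWeight (rightArc A B i j) = (n + 2 + j - i) * M + (A i).val + (B j).val := by
  simp [rightArc, wtE, wt0, M]
  omega

theorem wWeight_abCycle (i j : Fin n) :
    wWeight (abCycle A B i j) = 2 * ((n + 2) * M + (A i).val + (B j).val) := by
  rw [abCycle, wWeight_append, wWeight_reverse, wWeight_leftArc, wWeight_rightArc, M]
  omega

theorem wWeight_aaCycle (i j : Fin n) :
    wWeight (aaCycle A B i j) = 2 * ((n + 1) * M + (A i).val + (A j).val) := by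
  simp [aaCycle, wtE, wt0, M]
  omega

theorem wWeight_bbCycle (i j : Fin n) :
    wWeight (bbCycle A B i j) = 2 * ((n + 1) * M + (B i).val + (B j).val) := by
  simp [bbCycle, wtE, wt0, M]
  omega

end Gadget

section Distances

variable {n : ℕ} {A B : Fin n → Fin 2}

@[simp]
theorem support_abCycle (i j : Fin n) :
    (abCycle A B i j).support = [V.a i, V.l, V.l', V.b j, V.r', V.r, V.a i] := by
  simp [abCycle, leftArc, rightArc]

theorem dist_le_of_mem_abCycle {i j : Fin n} {x y : V n} (hx : x ∈ (abCycle A B i j).support)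
    (hy : y ∈ (abCycle A B i j).support) :
    dist n A B x y ≤ (n + 2) * M + (A i).val + (B j).val := by
  have := two_mul_dist_le _ hx hy
  rw [wWeight_abCycle] at this
  omega

theorem exists_mem_support_abCycle (k₀ : Fin n) (x : V n) :
    ∃ k, x ∈ (abCycle A B k k).support := by
  cases x with
  | a k | b k => exact ⟨k, by simp⟩
  | _ => exact ⟨k₀, by simp⟩

theorem exists_dist_le_of_forall_mem (k₀ : Fin n) {x : V n}
    (hx : ∀ k, x ∈ (abCycle A B k k).support) (y : V n) :
    ∃ k, dist n A B x y ≤ (n + 2) * M + (A k).val + (B k).val :=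
  let ⟨k, hy⟩ := exists_mem_support_abCycle k₀ y
  ⟨k, dist_le_of_mem_abCycle (hx k) hy⟩

theorem dist_a_a_le (i j : Fin n) : dist n A B (V.a i) (V.a j) ≤ (n + 1) * M + 2 := by
  have := two_mul_dist_le (x := V.a i) (y := V.a j) (aaCycle A B i j)
    (by simp [aaCycle]) (by simp [aaCycle])
  rw [wWeight_aaCycle] at this
  omega

theorem dist_b_b_le (i j : Fin n) : dist n A B (V.b i) (V.b j) ≤ (n + 1) * M + 2 := by
  have := two_mul_dist_le (x := V.b i) (y := V.b j) (bbCycle A B i j)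
    (by simp [bbCycle]) (by simp [bbCycle])
  rw [wWeight_bbCycle] at this
  omega

theorem dist_a_b_le_of_ne {i j : Fin n} (h : i ≠ j) :
    dist n A B (V.a i) (V.b j) ≤ (n + 1) * M + 2 := by
  have hl := dist_le_wWeight (leftArc A B i j)
  have hr := dist_le_wWeight (rightArc A B i j)
  rw [wWeight_leftArc] at hl
  rw [wWeight_rightArc] at hr
  have := Fin.val_ne_of_ne h
  simp only [M] at *
  omega

theorem exists_dist_a_b_le (i j : Fin n) :
    ∃ k, dist n A B (V.a i) (V.b j) ≤ (n + 2) * M + (A k).val + (B k).val := by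
  by_cases h : i = j
  · subst h
    exact ⟨i, dist_le_of_mem_abCycle (j := i) (by simp) (by simp)⟩
  · exact ⟨i, (dist_a_b_le_of_ne h).trans (by simp only [M]; omega)⟩

theorem exists_dist_le (k₀ : Fin n) :
    ∀ x y : V n, ∃ k, dist n A B x y ≤ (n + 2) * M + (A k).val + (B k).val
  | .a i, .a j => ⟨i, (dist_a_a_le i j).trans (by simp only [M]; omega)⟩
  | .b i, .b j => ⟨i, (dist_b_b_le i j).trans (by simp only [M]; omega)⟩
  | .a i, .b j => exists_dist_a_b_le i j
  | .b i, .a j => dist_comm (V.a j) (V.b i) ▸ exists_dist_a_b_le j i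
  | .l, y | .r, y | .l', y | .r', y => exists_dist_le_of_forall_mem k₀ (by simp) y
  | x, .l | x, .r | x, .l' | x, .r' => by
    simpa only [dist_comm x] using exists_dist_le_of_forall_mem k₀ (by simp) x

variable (A B) in
def potential (i : Fin n) : V n → ℤ
  | .a j => |(i : ℤ) - j| * M + (A i).val - (A j).val
  | .b j => (n + 2 - |(i : ℤ) - j|) * M + (A i).val + (B j).val
  | .l => (i + 1) * M + (A i).val
  | .r => (n - i) * M + (A i).val
  | .l' => (i + 2) * M + (A i).val
  | .r' => (n - i + 1) * M + (A i).val

theorem potential_le_add_wtE (i : Fin n) {x y : V n} (h : (G n A B).Adj x y) :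
    potential A B i y ≤ potential A B i x + wtE n A B x y := by
  rw [G, SimpleGraph.fromRel_adj] at h
  cases x <;> cases y <;> simp [wt0, potential, wtE, M, abs_eq_max_neg] at h ⊢ <;> omega

theorem le_dist_a_b (i : Fin n) :
    (n + 2) * M + (A i).val + (B i).val ≤ dist n A B (V.a i) (V.b i) := by
  have := sub_le_dist_of_lipschitz (potential A B i) (fun _ _ => potential_le_add_wtE i)
    ⟨leftArc A B i i⟩
  simp only [potential, sub_self, abs_zero, sub_zero, zero_mul, M] at this
  simp only [M]
  omega

end Distances

section Diameter

variable {n : ℕ} {A B : Fin n → Fin 2}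

theorem diam_le (k₀ : Fin n) {c : ℕ} (h : ∀ k, (A k).val + (B k).val ≤ c) :
    diam n A B ≤ (n + 2) * M + c :=
  Finset.sup_le fun p _ =>
    let ⟨k, hk⟩ := exists_dist_le k₀ p.1 p.2
    hk.trans (by have := h k; omega)

variable (A B) in
theorem le_diam (i : Fin n) : (n + 2) * M + (A i).val + (B i).val ≤ diam n A B :=
  (le_dist_a_b i).trans <|
    Finset.le_sup (f := fun p : V n × V n => dist n A B p.1 p.2) (Finset.mem_univ (V.a i, V.b i))

theorem val_mul_eq_zero_iff_add_le_one (a b : Fin 2) :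
    a.val * b.val = 0 ↔ a.val + b.val ≤ 1 := by
  rw [Nat.mul_eq_zero]
  omega

end Diameter

/-- The weighted diameter is `(n+2)·M + 2` if some coordinate has `A[i] = B[i] = 1`, and is
at most `(n+2)·M + 1` otherwise; equivalently, the diameter is at most `(n+2)·M + 1` iff
`A` and `B` are disjoint. -/
theorem diam_iff_disjoint (n : ℕ) (hn : 1 ≤ n) (A B : Fin n → Fin 2) :
    ((∃ i : Fin n, (A i).val = 1 ∧ (B i).val = 1) → diam n A B = (n + 2) * M + 2)
    ∧ ((∀ i : Fin n, (A i).val * (B i).val = 0) → diam n A B ≤ (n + 2) * M + 1)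
    ∧ (diam n A B ≤ (n + 2) * M + 1 ↔ ∀ i : Fin n, (A i).val * (B i).val = 0) := by
  have diam_le_of_disjoint (hd : ∀ i : Fin n, (A i).val * (B i).val = 0) :
      diam n A B ≤ (n + 2) * M + 1 :=
    diam_le ⟨0, hn⟩ fun k => (val_mul_eq_zero_iff_add_le_one _ _).mp (hd k)
  refine ⟨fun ⟨i, hA, hB⟩ => ?_, diam_le_of_disjoint, fun hle i => ?_, diam_le_of_disjoint⟩
  · refine le_antisymm (diam_le ⟨0, hn⟩ fun k => ?_) ?_
    · have := (A k).isLt; have := (B k).isLt; omega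
    · simpa [hA, hB, add_assoc] using le_diam A B i
  · exact (val_mul_eq_zero_iff_add_le_one _ _).mpr (by have := le_diam A B i; omega)

end DiamGadget
end

section
/- In the graph G, for all a≠b in {1,…,n} and all i,j∈{1,…,d}: d(u_{a,i}, u'_{b,j}) = (2d+1−|i−j|)·M + v_a[i] + v_b[j]. In particular, for i=j this distance equals (2d+1)·M + v_a[i] + v_b[i], while for i≠j it is at most 2d·M + 2. -/
open Finset

namespace OVGadget

inductive V (n d : ℕ) : Type
  | U : Fin n → Fin d → V n d
  | U' : Fin n → Fin d → V n d
  | l : V n d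
  | r : V n d
  deriving DecidableEq, Fintype

def M : ℕ := 4

/-- One-directional edge-weight table encoding the vectors `v_1, …, v_n`; a value `0` means
"no edge".  Here `j : Fin d` is 0-indexed, so `U k j` is the paper's `u_{k+1, j+1}`, whence
the weights `(j+1)·M + v_k[j]` and `(2d+1−(j+1))·M + v_k[j] = (2d−j)·M + v_k[j]`. -/
def wt0 (n d : ℕ) (v : Fin n → Fin d → Fin 2) : V n d → V n d → ℕ
  | V.U k j, V.l => (j.val + 1) * M + (v k j).val
  | V.U' k j, V.l => (2 * d - j.val) * M + (v k j).val
  | V.U k j, V.r => (2 * d - j.val) * M + (v k j).val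
  | V.U' k j, V.r => (j.val + 1) * M + (v k j).val
  | _, _ => 0

/-- The symmetrized edge weight. -/
def wtE (n d : ℕ) (v : Fin n → Fin d → Fin 2) (x y : V n d) : ℕ :=
  wt0 n d v x y + wt0 n d v y x

/-- The graph `G`: `x` and `y` are adjacent iff the weight table records an edge. -/
def G (n d : ℕ) (v : Fin n → Fin d → Fin 2) : SimpleGraph (V n d) :=
  SimpleGraph.fromRel fun x y => wt0 n d v x y ≠ 0

/-- The total weight of a walk. -/
def wWeight {n d : ℕ} {v : Fin n → Fin d → Fin 2} {x y : V n d}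
    (p : (G n d v).Walk x y) : ℕ :=
  (p.darts.map fun e => wtE n d v e.toProd.1 e.toProd.2).sum

/-- The weighted shortest-path distance: the minimum over paths from `x` to `y` of the sum
of the edge weights along the path. -/
noncomputable def dist (n d : ℕ) (v : Fin n → Fin d → Fin 2) (x y : V n d) : ℕ :=
  sInf {m | ∃ p : (G n d v).Walk x y, p.IsPath ∧ wWeight p = m}

/-- Membership in the set `S_k = {u_{k,j}, u'_{k,j} : j}`. -/
def inS (n d : ℕ) (k : Fin n) (x : V n d) : Prop :=
  (∃ j : Fin d, x = V.U k j) ∨ (∃ j : Fin d, x = V.U' k j)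

/-- The set `S_k` as a finite set of vertices. -/
def SF (n d : ℕ) (k : Fin n) : Finset (V n d) :=
  (Finset.univ.image fun j : Fin d => V.U k j)
    ∪ (Finset.univ.image fun j : Fin d => V.U' k j)

/-- `Max-Dist(S_a, S_b) = max_{x ∈ S_a, y ∈ S_b} d(x, y)`. -/
noncomputable def maxDist (n d : ℕ) (v : Fin n → Fin d → Fin 2) (a b : Fin n) : ℕ :=
  (SF n d a ×ˢ SF n d b).sup fun p => dist n d v p.1 p.2

/-! Every edge joins a vertex of some `S_k` to one of the two hubs `ℓ`, `r`, so routing through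
a single hub gives the two candidate lengths `w(s,ℓ) + w(ℓ,t)` and `w(s,r) + w(r,t)`, whose
minimum is the claimed formula. For the matching lower bound, take the values `α = w(s,ℓ)`,
`β = w(s,r)` at the hubs and extend them to every other vertex `z` by
`min (α + w(z,ℓ)) (β + w(z,r))`. Going from one hub to the other through any `z` costs
`w(z,ℓ) + w(z,r) ≥ (2d+1)·M > |α - β|`, so no edge increases this potential by more than its
weight, and summing along a walk bounds its weight. -/

theorem _root_.SimpleGraph.Walk.le_add_sum_darts_of_potential {W : Type*} {H : SimpleGraph W}
    (w : W → W → ℕ) (φ : W → ℕ) (hφ : ∀ x y, H.Adj x y → φ y ≤ φ x + w x y)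
    {x y : W} :
    ∀ p : H.Walk x y, φ y ≤ φ x + (p.darts.map fun e => w e.fst e.snd).sum
  | .nil => by simp
  | .cons h p => by
    have := p.le_add_sum_darts_of_potential w φ hφ
    have := hφ _ _ h
    simp only [SimpleGraph.Walk.darts_cons, List.map_cons, List.sum_cons]
    omega

variable {n d : ℕ} {v : Fin n → Fin d → Fin 2}

def IsHub (x : V n d) : Prop := x = V.l ∨ x = V.r

lemma wtE_comm (x y : V n d) : wtE n d v x y = wtE n d v y x := Nat.add_comm _ _

@[simp] lemma wtE_U_l (k : Fin n) (j : Fin d) :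
    wtE n d v (V.U k j) V.l = (j.val + 1) * M + (v k j).val := by simp [wtE, wt0]
@[simp] lemma wtE_U_r (k : Fin n) (j : Fin d) :
    wtE n d v (V.U k j) V.r = (2 * d - j.val) * M + (v k j).val := by simp [wtE, wt0]
@[simp] lemma wtE_U'_l (k : Fin n) (j : Fin d) :
    wtE n d v (V.U' k j) V.l = (2 * d - j.val) * M + (v k j).val := by simp [wtE, wt0]
@[simp] lemma wtE_U'_r (k : Fin n) (j : Fin d) :
    wtE n d v (V.U' k j) V.r = (j.val + 1) * M + (v k j).val := by simp [wtE, wt0]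

lemma not_isHub_and_isHub_of_wt0_ne_zero {x y : V n d} (h : wt0 n d v x y ≠ 0) :
    ¬IsHub x ∧ IsHub y := by
  cases x <;> cases y <;> simp_all [wt0, IsHub]

lemma isHub_xor_isHub_of_adj {x y : V n d} (h : (G n d v).Adj x y) :
    Xor (IsHub x) (IsHub y) := by
  rcases h with ⟨-, h | h⟩
  · exact .inr (not_isHub_and_isHub_of_wt0_ne_zero h).symm
  · exact .inl (not_isHub_and_isHub_of_wt0_ne_zero h).symm

lemma adj_of_not_isHub_of_isHub {z h : V n d} (hz : ¬IsHub z) (hh : IsHub h) :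
    (G n d v).Adj z h := by
  refine ⟨fun e => hz (e ▸ hh), .inl ?_⟩
  rcases hh with rfl | rfl <;> cases z <;> simp_all [IsHub, wt0, M] <;> omega

lemma wtE_le_of_not_isHub {z h : V n d} (hz : ¬IsHub z) (hh : IsHub h) :
    wtE n d v z h ≤ 2 * d * M + 1 := by
  rcases hh with rfl | rfl <;> cases z <;> simp_all [IsHub, M] <;> omega

lemma le_wtE_l_add_wtE_r {z : V n d} (hz : ¬IsHub z) :
    (2 * d + 1) * M ≤ wtE n d v z V.l + wtE n d v z V.r := by
  cases z <;> simp_all [IsHub, M] <;> omega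

variable (v) in
def hubPot (α β : ℕ) : V n d → ℕ
  | V.l => α
  | V.r => β
  | z => min (α + wtE n d v z V.l) (β + wtE n d v z V.r)

lemma hubPot_of_not_isHub {α β : ℕ} {z : V n d} (hz : ¬IsHub z) :
    hubPot v α β z = min (α + wtE n d v z V.l) (β + wtE n d v z V.r) := by
  cases z <;> simp_all [IsHub, hubPot]

lemma hubPot_le_hubPot_add_wtE {α β : ℕ} (hαβ : α ≤ β + (2 * d + 1) * M)
    (hβα : β ≤ α + (2 * d + 1) * M) {x y : V n d} (hxy : (G n d v).Adj x y) :
    hubPot v α β y ≤ hubPot v α β x + wtE n d v x y := by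
  rcases isHub_xor_isHub_of_adj hxy with ⟨hx, hy⟩ | ⟨hy, hx⟩
  · rw [hubPot_of_not_isHub hy, wtE_comm x y]
    rcases hx with rfl | rfl <;> simp only [hubPot] <;> omega
  · have := le_wtE_l_add_wtE_r (v := v) hx
    rw [hubPot_of_not_isHub hx]
    rcases hy with rfl | rfl <;> simp only [hubPot] <;> omega

lemma min_le_wWeight {s t : V n d} (hs : ¬IsHub s) (ht : ¬IsHub t) (hst : s ≠ t)
    (p : (G n d v).Walk s t) :
    min (wtE n d v s V.l + wtE n d v t V.l) (wtE n d v s V.r + wtE n d v t V.r) ≤ wWeight p := by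
  cases p with
  | nil => exact absurd rfl hst
  | @cons _ x _ hsx q =>
    have hx : IsHub x := by simpa [Xor, hs] using isHub_xor_isHub_of_adj hsx
    have hl := wtE_le_of_not_isHub (v := v) hs (.inl rfl)
    have hr := wtE_le_of_not_isHub (v := v) hs (.inr rfl)
    have hq : hubPot v (wtE n d v s V.l) (wtE n d v s V.r) t ≤
        hubPot v (wtE n d v s V.l) (wtE n d v s V.r) x + wWeight q :=
      q.le_add_sum_darts_of_potential _ _ fun _ _ => hubPot_le_hubPot_add_wtE
        (by simp only [M] at hl ⊢; omega) (by simp only [M] at hr ⊢; omega)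
    have hpot_x : hubPot v (wtE n d v s V.l) (wtE n d v s V.r) x = wtE n d v s x := by
      rcases hx with rfl | rfl <;> rfl
    rw [hubPot_of_not_isHub ht, hpot_x] at hq
    simp only [wWeight, SimpleGraph.Walk.darts_cons, List.map_cons, List.sum_cons]
    exact (by omega : _ ≤ _).trans hq

lemma exists_isPath_wWeight_eq {x h y : V n d} (hx : ¬IsHub x) (hh : IsHub h) (hy : ¬IsHub y)
    (hxy : x ≠ y) :
    ∃ p : (G n d v).Walk x y, p.IsPath ∧ wWeight p = wtE n d v x h + wtE n d v y h := by
  have hxh := adj_of_not_isHub_of_isHub (v := v) hx hh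
  have hhy := (adj_of_not_isHub_of_isHub (v := v) hy hh).symm
  refine ⟨.cons hxh (.cons hhy .nil), ?_, ?_⟩
  · simp [SimpleGraph.Walk.cons_isPath_iff, hxh.ne, hhy.ne, hxy]
  · simp [wWeight, wtE_comm h y]

lemma dist_eq_min {s t : V n d} (hs : ¬IsHub s) (ht : ¬IsHub t) (hst : s ≠ t) :
    dist n d v s t =
      min (wtE n d v s V.l + wtE n d v t V.l) (wtE n d v s V.r + wtE n d v t V.r) := by
  obtain ⟨pl, hpl, hwl⟩ := exists_isPath_wWeight_eq (v := v) hs (.inl rfl) ht hst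
  obtain ⟨pr, hpr, hwr⟩ := exists_isPath_wWeight_eq (v := v) hs (.inr rfl) ht hst
  refine le_antisymm (le_min ?_ ?_) (le_csInf ⟨_, pl, hpl, rfl⟩ ?_)
  · exact Nat.sInf_le ⟨pl, hpl, hwl⟩
  · exact Nat.sInf_le ⟨pr, hpr, hwr⟩
  · rintro _ ⟨p, -, rfl⟩
    exact min_le_wWeight hs ht hst p

theorem dist_mixed_pairs_general (n d : ℕ)
    (v : Fin n → Fin d → Fin 2) (a b : Fin n) (i j : Fin d) :
    (dist n d v (V.U a i) (V.U' b j) =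
      (2 * d + 1 - (max i.val j.val - min i.val j.val)) * M + (v a i).val + (v b j).val)
    ∧ (i = j → dist n d v (V.U a i) (V.U' b i) =
        (2 * d + 1) * M + (v a i).val + (v b i).val)
    ∧ (i ≠ j → dist n d v (V.U a i) (V.U' b j) ≤ 2 * d * M + 2) := by
  have hdist : ∀ j, dist n d v (V.U a i) (V.U' b j) =
      (2 * d + 1 - (max i.val j.val - min i.val j.val)) * M + (v a i).val + (v b j).val := by
    intro j
    rw [dist_eq_min (by simp [IsHub]) (by simp [IsHub]) (by simp)]
    have := i.isLt; have := j.isLt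
    simp only [wtE_U_l, wtE_U_r, wtE_U'_l, wtE_U'_r, M]
    omega
  refine ⟨hdist j, fun _ => by simpa using hdist i, fun hij => ?_⟩
  have := (v a i).isLt; have := (v b j).isLt; have := Fin.val_ne_of_ne hij
  rw [hdist]
  simp only [M]
  omega

/-- For `a ≠ b`: `d(u_{a,i}, u'_{b,j}) = (2d+1−|i−j|)·M + v_a[i] + v_b[j]`; in particular it
equals `(2d+1)·M + v_a[i] + v_b[i]` when `i = j` and is at most `2d·M + 2` when `i ≠ j`. -/
theorem dist_mixed_pairs (n d : ℕ) (hn : 2 ≤ n) (hd : 1 ≤ d)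
    (v : Fin n → Fin d → Fin 2) (a b : Fin n) (hab : a ≠ b) (i j : Fin d) :
    (dist n d v (V.U a i) (V.U' b j) =
      (2 * d + 1 - (max i.val j.val - min i.val j.val)) * M + (v a i).val + (v b j).val)
    ∧ (i = j → dist n d v (V.U a i) (V.U' b i) =
        (2 * d + 1) * M + (v a i).val + (v b i).val)
    ∧ (i ≠ j → dist n d v (V.U a i) (V.U' b j) ≤ 2 * d * M + 2) :=
  dist_mixed_pairs_general n d v a b i j

end OVGadget
end
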